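/- arXiv:2005.02038 — 2 statements merged into one kernel-verified Lean document; each statement's English description precedes it below -/
import Mathlib

section
/- With u_n, v_n as above, gcd(length(u_n), length(u_n·v_n)) = 1 and gcd(length(u_n), length(u_n·v_n·u_n·u_n)) = 1, where · denotes concatenation. -/
/-- The substitution φ on {0,1}: φ(0) = 1, φ(1) = 100. -/
def phiLetter : ℕ → List ℕ
  | 0 => [1]
  | _ => [1, 0, 0]

/-- φ extended to words by concatenation. -/
def phiWord (w : List ℕ) : List ℕ := w.flatMap phiLetter

/-- u_n = φⁿ(1). -/
def uWord (n : ℕ) : List ℕ := phiWord^[n] [1]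

/-- v_n = u_{n-1} u_{n-1} = φⁿ(00). -/
def vWord (n : ℕ) : List ℕ := uWord (n - 1) ++ uWord (n - 1)

lemma phiWord_append (x y : List ℕ) : phiWord (x ++ y) = phiWord x ++ phiWord y := by
  simp [phiWord]

lemma phiWord_iter_append (n : ℕ) (x y : List ℕ) :
    phiWord^[n] (x ++ y) = phiWord^[n] x ++ phiWord^[n] y := by
  induction n generalizing x y with
  | zero => simp
  | succ n ih => simp [Function.iterate_succ_apply, phiWord_append, ih]

lemma uWord_succ (n : ℕ) :
    uWord (n + 1) = uWord n ++ phiWord^[n] [0] ++ phiWord^[n] [0] := by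
  have : phiWord [1] = [1] ++ [0] ++ [0] := by decide
  simp only [uWord, Function.iterate_succ_apply, this, phiWord_iter_append]

lemma zWord_succ (n : ℕ) : phiWord^[n + 1] [0] = uWord n := by
  have : phiWord [0] = [1] := by decide
  simp [uWord, Function.iterate_succ_apply, this]

/-- length of u_n -/
def A (n : ℕ) : ℕ := (uWord n).length

lemma A_zero : A 0 = 1 := by decide

lemma A_one : A 1 = 3 := by decide

lemma A_succ_succ (n : ℕ) : A (n + 2) = A (n + 1) + 2 * A n := by
  simp [A, uWord_succ (n+1), zWord_succ]; ring

lemma A_odd : ∀ n, ¬ 2 ∣ A n := by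
  intro n
  induction n using Nat.twoStepInduction with
  | zero => decide
  | one => decide
  | more n ih ih1 =>
    rw [A_succ_succ]
    omega


lemma A_coprime : ∀ n, Nat.Coprime (A (n + 1)) (A n) := by
  intro n
  induction n with
  | zero => decide
  | succ n ih =>
    rw [A_succ_succ]
    have h2 : Nat.Coprime (A (n + 1)) 2 :=
      ((Nat.Prime.coprime_iff_not_dvd Nat.prime_two).mpr (A_odd (n+1))).symm
    have hc : Nat.Coprime (2 * A n) (A (n + 1)) := (h2.mul_right ih).symm
    rw [Nat.add_comm]
    exact Nat.coprime_add_self_left.mpr hc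

theorem stmt_8 : ∀ n : ℕ, 1 ≤ n →
    Nat.gcd (uWord n).length (uWord n ++ vWord n).length = 1 ∧
    Nat.gcd (uWord n).length (uWord n ++ vWord n ++ uWord n ++ uWord n).length = 1 := by
  intro n hn
  obtain ⟨m, rfl⟩ := Nat.exists_eq_add_of_le hn
  have hA : (uWord (1 + m)).length = A (m + 1) := by rw [Nat.add_comm]; rfl
  have hV : (vWord (1 + m)).length = 2 * A m := by
    simp [vWord, A, Nat.add_comm 1 m]; ring
  have h2 : Nat.Coprime (A (m + 1)) 2 :=
    ((Nat.Prime.coprime_iff_not_dvd Nat.prime_two).mpr (A_odd (m+1))).symm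
  have hc : Nat.Coprime (A (m + 1)) (2 * A m) := h2.mul_right (A_coprime m)
  constructor
  · show Nat.Coprime _ _
    rw [List.length_append, hA, hV, Nat.add_comm (A (m+1)) (2 * A m)]
    exact Nat.coprime_add_self_right.mpr hc
  · show Nat.Coprime _ _
    simp only [List.length_append, hA, hV]
    have : A (m + 1) + 2 * A m + A (m + 1) + A (m + 1) = 2 * A m + 3 * A (m + 1) := by ring
    rw [this]
    exact (Nat.coprime_add_mul_right_right _ _ 3).mpr hc
end

section
/- Let p, q be positive integers and let β₁ > 1 be the unique real with β₁^{−p} + β₁^{−q} = 1. Let k be a positive integer with 1 ≤ k < max(p,q), and let β₂ > 1 be the unique real with β₂^{−1} + β₂^{−k} = 1. Then β₁ < β₂. -/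
lemma one_div_pow_add_one_div_pow_le_of_le {x y : ℝ} (hx : 0 < x) (hxy : x ≤ y) (a b : ℕ) :
    1 / y ^ a + 1 / y ^ b ≤ 1 / x ^ a + 1 / x ^ b := by
  gcongr

lemma one_div_pow_add_one_div_pow_lt_of_le_of_lt {x : ℝ} (hx : 1 < x) {a b c d : ℕ}
    (hca : c ≤ a) (hdb : d < b) : 1 / x ^ a + 1 / x ^ b < 1 / x ^ c + 1 / x ^ d :=
  add_lt_add_of_le_of_lt (one_div_pow_le_one_div_pow_of_le hx.le hca)
    (one_div_pow_lt_one_div_pow_of_lt hx hdb)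

theorem stmt_16_general (p q k : ℕ) (hp : 0 < p) (hq : 0 < q) (hkm : k < max p q)
    (β₁ β₂ : ℝ) (h1 : 1 / β₁ ^ p + 1 / β₁ ^ q = 1)
    (hβ₂ : 1 < β₂) (h2 : 1 / β₂ + 1 / β₂ ^ k = 1) :
    β₁ < β₂ := by
  wlog hpq : p ≤ q generalizing p q
  · exact this q p hq hp (by rwa [max_comm]) (by rwa [add_comm]) (le_of_not_ge hpq)
  rw [max_eq_right hpq] at hkm
  by_contra! hβ
  have : (1 : ℝ) < 1 :=
    calc (1 : ℝ) = 1 / β₁ ^ p + 1 / β₁ ^ q := h1.symm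
      _ ≤ 1 / β₂ ^ p + 1 / β₂ ^ q := one_div_pow_add_one_div_pow_le_of_le (by linarith) hβ p q
      _ < 1 / β₂ ^ 1 + 1 / β₂ ^ k := one_div_pow_add_one_div_pow_lt_of_le_of_lt hβ₂ hp hkm
      _ = 1 := by rw [pow_one, h2]
  exact lt_irrefl 1 this

theorem stmt_16 (p q k : ℕ) (hp : 0 < p) (hq : 0 < q) (hk : 1 ≤ k) (hkm : k < max p q)
    (β₁ β₂ : ℝ) (hβ₁ : 1 < β₁) (h1 : 1 / β₁ ^ p + 1 / β₁ ^ q = 1)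
    (hβ₂ : 1 < β₂) (h2 : 1 / β₂ + 1 / β₂ ^ k = 1) :
    β₁ < β₂ :=
  stmt_16_general p q k hp hq hkm β₁ β₂ h1 hβ₂ h2
end
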